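/- The complexified Levi-Civita connection ∇̃ satisfies: ∇̃_{L_m} L_n = -2i λ_{m,n} L_{m+n} for all m, n ≥ 1; ∇̃_{L_{-m}} L_n = i(m+n) L_{n-m} if n > m and 0 if n ≤ m; ∇̃_{L_m} L_{-n} = -i(m+n) L_{m-n} if n > m and 0 if n ≤ m; and ∇̃_{L_{-m}} L_{-n} = 2i λ_{m,n} L_{-m-n}. -/

import Mathlib

/-- index type for the basis `{f_{k+1}} ∪ {g_{k+1}}` of `diff_0(S¹)`:
`Sum.inl k` stands for `f_{k+1} = cos((k+1)t)`, `Sum.inr k` for `g_{k+1} = sin((k+1)t)`. -/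
abbrev Idx := ℕ ⊕ ℕ

/-- the complexification of `diff_0(S¹)`, modelled as the free complex vector space on the
basis `{f_k, g_k : k ≥ 1}`. -/
abbrev Vc := Idx →₀ ℂ

/-- `f_k = cos(kt)` (with `f_0` projected to `0`) -/
noncomputable def Fc : ℕ → Vc := fun k =>
  if k = 0 then 0 else Finsupp.single (Sum.inl (k - 1)) 1

/-- `g_k = sin(kt)` (with `g_0 = 0`) -/
noncomputable def Gc : ℕ → Vc := fun k =>
  if k = 0 then 0 else Finsupp.single (Sum.inr (k - 1)) 1

/-- `θ_k = 2hk + (c/12)(k³ - k)` -/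
noncomputable def th (c h : ℝ) (k : ℤ) : ℝ := 2 * h * k + c / 12 * ((k : ℝ) ^ 3 - k)

/-- `λ_{m,n} = (2n+m)θ_m / (2θ_{m+n})` -/
noncomputable def lam (c h : ℝ) (m n : ℤ) : ℝ :=
  (2 * (n : ℝ) + m) * th c h m / (2 * th c h (m + n))

/-- `|M - N|` for natural numbers -/
def dN (M N : ℕ) : ℕ := max M N - min M N

/-- `sign (M - N)` -/
noncomputable def sgc (M N : ℕ) : ℂ := if N < M then 1 else -1

/-- the projected bracket `[·,·]_m` on basis elements, extended complex-bilinearly -/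
noncomputable def brBc : Idx → Idx → Vc
  | Sum.inl m, Sum.inl n =>
      (((m : ℂ) - n) / 2) • Gc (m + n + 2)
        + (((m : ℂ) + n + 2) / 2 * sgc (m + 1) (n + 1)) • Gc (dN (m + 1) (n + 1))
  | Sum.inl m, Sum.inr n =>
      (((n : ℂ) - m) / 2) • Fc (m + n + 2)
        + (((m : ℂ) + n + 2) / 2) • Fc (dN (m + 1) (n + 1))
  | Sum.inr m, Sum.inl n =>
      -((((m : ℂ) - n) / 2) • Fc (m + n + 2)
        + (((m : ℂ) + n + 2) / 2) • Fc (dN (m + 1) (n + 1)))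
  | Sum.inr m, Sum.inr n =>
      (((n : ℂ) - m) / 2) • Gc (m + n + 2)
        + (((m : ℂ) + n + 2) / 2 * sgc (m + 1) (n + 1)) • Gc (dN (m + 1) (n + 1))

/-- complex-bilinear extension of a map given on basis elements -/
noncomputable def bilc (φ : Idx → Idx → Vc) (x y : Vc) : Vc :=
  x.sum fun i a => y.sum fun j b => (a * b) • φ i j

/-- the projected (mean-zero) bracket on the complexification of `diff_0(S¹)` -/
noncomputable def brmc : Vc → Vc → Vc := bilc brBc

/-- `L_m = f_m + i g_m` and `L_{-m} = f_m - i g_m` for `m ≥ 1` (and `L_0 = f_0`,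
which is projected to `0` in `diff_0(S¹)`). -/
noncomputable def L : ℤ → Vc := fun n =>
  if n = 0 then 0
  else Fc n.natAbs + ((if 0 < n then Complex.I else -Complex.I) • Gc n.natAbs)

/- On a pair of basis vectors `∇̃` is `±λ_{m,n}` times the `(n+m)`-th basis vector plus
`±(m+n)/2` times the `(n-m)`-th one. Expanding `∇̃_{f_m + a g_m} (f_n + b g_n)` bilinearly with
`a² = b² = -1`: for `b = a` the `(n-m)`-terms cancel and `-2aλ_{m,n} (f_{m+n} + a g_{m+n})` is
left, a multiple of `L_{±(m+n)}`; for `b = -a` the `(n+m)`-terms cancel and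
`a(m+n) (f_{n-m} + a g_{n-m})` is left, a multiple of `L_{±(n-m)}` that vanishes when `n ≤ m`. -/

open Complex

@[simp] lemma Fc_zero : Fc 0 = 0 := by simp [Fc]

@[simp] lemma Gc_zero : Gc 0 = 0 := by simp [Gc]

lemma L_natCast (k : ℕ) : L k = Fc k + I • Gc k := by
  rcases Nat.eq_zero_or_pos k with rfl | hk
  · simp [L]
  · simp [L, hk.ne']

lemma L_neg_natCast (k : ℕ) : L (-k) = Fc k + (-I) • Gc k := by
  rcases Nat.eq_zero_or_pos k with rfl | hk
  · simp [L]
  · simp [L, hk.ne']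

/- Since `Fc 0 = Gc 0 = 0`, the truncated difference `n - m` lets the three cases `m < n`,
`m = n`, `n < m` of each value of the connection be written as one formula. -/
section UniformValues

variable {D : Vc → Vc → Vc} {c h : ℝ} {m n : ℕ}

lemma apply_Fc_Fc
    (hff1 : ∀ m n : ℕ, 1 ≤ m → m < n →
      D (Fc m) (Fc n) = (lam c h m n : ℂ) • Gc (n + m) - (((m : ℂ) + n) / 2) • Gc (n - m))
    (hff2 : ∀ m n : ℕ, 1 ≤ n → n < m → D (Fc m) (Fc n) = (lam c h m n : ℂ) • Gc (n + m))
    (hff3 : ∀ n : ℕ, 1 ≤ n → D (Fc n) (Fc n) = (lam c h n n : ℂ) • Gc (2 * n))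
    (hm : 1 ≤ m) (hn : 1 ≤ n) :
    D (Fc m) (Fc n) = (lam c h m n : ℂ) • Gc (n + m) - (((m : ℂ) + n) / 2) • Gc (n - m) := by
  rcases lt_trichotomy m n with hlt | rfl | hgt
  · exact hff1 m n hm hlt
  · simp [hff3 m hm, two_mul]
  · simp [hff2 m n hn hgt, Nat.sub_eq_zero_of_le hgt.le]

lemma apply_Fc_Gc
    (hfg1 : ∀ m n : ℕ, 1 ≤ m → m < n →
      D (Fc m) (Gc n) = (((m : ℂ) + n) / 2) • Fc (n - m) - (lam c h m n : ℂ) • Fc (n + m))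
    (hfg2 : ∀ m n : ℕ, 1 ≤ n → n < m → D (Fc m) (Gc n) = (-(lam c h m n : ℂ)) • Fc (n + m))
    (hfg3 : ∀ n : ℕ, 1 ≤ n → D (Fc n) (Gc n) = (-(lam c h n n : ℂ)) • Fc (2 * n))
    (hm : 1 ≤ m) (hn : 1 ≤ n) :
    D (Fc m) (Gc n) = (((m : ℂ) + n) / 2) • Fc (n - m) - (lam c h m n : ℂ) • Fc (n + m) := by
  rcases lt_trichotomy m n with hlt | rfl | hgt
  · exact hfg1 m n hm hlt
  · simp [hfg3 m hm, two_mul, neg_smul]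
  · simp [hfg2 m n hn hgt, Nat.sub_eq_zero_of_le hgt.le, neg_smul]

lemma apply_Gc_Fc
    (hgf1 : ∀ m n : ℕ, 1 ≤ m → m < n → D (Gc n) (Fc m) = (-(lam c h n m : ℂ)) • Fc (n + m))
    (hgf2 : ∀ m n : ℕ, 1 ≤ n → n < m →
      D (Gc n) (Fc m) = (-(lam c h n m : ℂ)) • Fc (n + m) - (((m : ℂ) + n) / 2) • Fc (m - n))
    (hgf3 : ∀ n : ℕ, 1 ≤ n → D (Gc n) (Fc n) = (-(lam c h n n : ℂ)) • Fc (2 * n))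
    (hm : 1 ≤ m) (hn : 1 ≤ n) :
    D (Gc m) (Fc n) = (-(lam c h m n : ℂ)) • Fc (n + m) - (((m : ℂ) + n) / 2) • Fc (n - m) := by
  rcases lt_trichotomy m n with hlt | rfl | hgt
  · rw [hgf2 n m hm hlt, add_comm (n : ℂ), add_comm n]
  · simp [hgf3 m hm, two_mul]
  · simp [hgf1 n m hn hgt, Nat.sub_eq_zero_of_le hgt.le, add_comm n]

lemma apply_Gc_Gc
    (hgg1 : ∀ m n : ℕ, 1 ≤ m → m < n →
      D (Gc m) (Gc n) = (-(lam c h m n : ℂ)) • Gc (n + m) - (((m : ℂ) + n) / 2) • Gc (n - m))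
    (hgg2 : ∀ m n : ℕ, 1 ≤ n → n < m → D (Gc m) (Gc n) = (-(lam c h m n : ℂ)) • Gc (n + m))
    (hgg3 : ∀ n : ℕ, 1 ≤ n → D (Gc n) (Gc n) = (-(lam c h n n : ℂ)) • Gc (2 * n))
    (hm : 1 ≤ m) (hn : 1 ≤ n) :
    D (Gc m) (Gc n) = (-(lam c h m n : ℂ)) • Gc (n + m) - (((m : ℂ) + n) / 2) • Gc (n - m) := by
  rcases lt_trichotomy m n with hlt | rfl | hgt
  · exact hgg1 m n hm hlt
  · simp [hgg3 m hm, two_mul]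
  · simp [hgg2 m n hn hgt, Nat.sub_eq_zero_of_le hgt.le]

end UniformValues

section Bilinear

variable (B : Vc →ₗ[ℂ] Vc →ₗ[ℂ] Vc) {l s a : ℂ} {m n : ℕ}

lemma apply_Fc_add_smul_Gc_same
    (hFF : B (Fc m) (Fc n) = l • Gc (n + m) - s • Gc (n - m))
    (hFG : B (Fc m) (Gc n) = s • Fc (n - m) - l • Fc (n + m))
    (hGF : B (Gc m) (Fc n) = (-l) • Fc (n + m) - s • Fc (n - m))
    (hGG : B (Gc m) (Gc n) = (-l) • Gc (n + m) - s • Gc (n - m)) (ha : a * a = -1) :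
    B (Fc m + a • Gc m) (Fc n + a • Gc n) = (-2 * a * l) • (Fc (n + m) + a • Gc (n + m)) := by
  simp only [map_add, map_smul, LinearMap.add_apply, LinearMap.smul_apply, hFF, hFG, hGF, hGG]
  linear_combination (norm := module) ha • (l • Gc (n + m) - s • Gc (n - m))

lemma apply_Fc_add_neg_smul_Gc
    (hFF : B (Fc m) (Fc n) = l • Gc (n + m) - s • Gc (n - m))
    (hFG : B (Fc m) (Gc n) = s • Fc (n - m) - l • Fc (n + m))
    (hGF : B (Gc m) (Fc n) = (-l) • Fc (n + m) - s • Fc (n - m))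
    (hGG : B (Gc m) (Gc n) = (-l) • Gc (n + m) - s • Gc (n - m)) (ha : a * a = -1) :
    B (Fc m + (-a) • Gc m) (Fc n + a • Gc n) = (2 * a * s) • (Fc (n - m) + a • Gc (n - m)) := by
  simp only [map_add, map_smul, LinearMap.add_apply, LinearMap.smul_apply, hFF, hFG, hGF, hGG]
  linear_combination (norm := module) ha • (l • Gc (n + m) - s • Gc (n - m))

end Bilinear

theorem nablaTilde_L_values_general (c h : ℝ)
    (D : Vc → Vc → Vc)
    (hadd1 : ∀ x y z : Vc, D (x + y) z = D x z + D y z)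
    (hadd2 : ∀ x y z : Vc, D x (y + z) = D x y + D x z)
    (hsmul1 : ∀ (r : ℂ) (x y : Vc), D (r • x) y = r • D x y)
    (hsmul2 : ∀ (r : ℂ) (x y : Vc), D x (r • y) = r • D x y)
    (hff1 : ∀ m n : ℕ, 1 ≤ m → m < n →
      D (Fc m) (Fc n) = (lam c h m n : ℂ) • Gc (n + m) - (((m : ℂ) + n) / 2) • Gc (n - m))
    (hff2 : ∀ m n : ℕ, 1 ≤ n → n < m → D (Fc m) (Fc n) = (lam c h m n : ℂ) • Gc (n + m))
    (hff3 : ∀ n : ℕ, 1 ≤ n → D (Fc n) (Fc n) = (lam c h n n : ℂ) • Gc (2 * n))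
    (hfg1 : ∀ m n : ℕ, 1 ≤ m → m < n →
      D (Fc m) (Gc n) = (((m : ℂ) + n) / 2) • Fc (n - m) - (lam c h m n : ℂ) • Fc (n + m))
    (hfg2 : ∀ m n : ℕ, 1 ≤ n → n < m → D (Fc m) (Gc n) = (-(lam c h m n : ℂ)) • Fc (n + m))
    (hfg3 : ∀ n : ℕ, 1 ≤ n → D (Fc n) (Gc n) = (-(lam c h n n : ℂ)) • Fc (2 * n))
    (hgf1 : ∀ m n : ℕ, 1 ≤ m → m < n → D (Gc n) (Fc m) = (-(lam c h n m : ℂ)) • Fc (n + m))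
    (hgf2 : ∀ m n : ℕ, 1 ≤ n → n < m →
      D (Gc n) (Fc m) = (-(lam c h n m : ℂ)) • Fc (n + m) - (((m : ℂ) + n) / 2) • Fc (m - n))
    (hgf3 : ∀ n : ℕ, 1 ≤ n → D (Gc n) (Fc n) = (-(lam c h n n : ℂ)) • Fc (2 * n))
    (hgg1 : ∀ m n : ℕ, 1 ≤ m → m < n →
      D (Gc m) (Gc n) = (-(lam c h m n : ℂ)) • Gc (n + m) - (((m : ℂ) + n) / 2) • Gc (n - m))
    (hgg2 : ∀ m n : ℕ, 1 ≤ n → n < m → D (Gc m) (Gc n) = (-(lam c h m n : ℂ)) • Gc (n + m))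
    (hgg3 : ∀ n : ℕ, 1 ≤ n → D (Gc n) (Gc n) = (-(lam c h n n : ℂ)) • Gc (2 * n))
    (m n : ℕ) (hm : 1 ≤ m) (hn : 1 ≤ n) :
    D (L m) (L n) = (-2 * Complex.I * (lam c h m n : ℂ)) • L ((m : ℤ) + n) ∧
    (m < n → D (L (-(m : ℤ))) (L n) = (Complex.I * ((m : ℂ) + n)) • L ((n : ℤ) - m)) ∧
    (n ≤ m → D (L (-(m : ℤ))) (L n) = 0) ∧
    (m < n → D (L m) (L (-(n : ℤ))) = (-(Complex.I * ((m : ℂ) + n))) • L ((m : ℤ) - n)) ∧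
    (n ≤ m → D (L m) (L (-(n : ℤ))) = 0) ∧
    D (L (-(m : ℤ))) (L (-(n : ℤ))) = (2 * Complex.I * (lam c h m n : ℂ)) • L (-(m : ℤ) - n) := by
  let B : Vc →ₗ[ℂ] Vc →ₗ[ℂ] Vc := LinearMap.mk₂ ℂ D hadd1 hsmul1 hadd2 hsmul2
  have hD : ∀ x y, D x y = B x y := fun _ _ => rfl
  have hFF := apply_Fc_Fc hff1 hff2 hff3 hm hn
  have hFG := apply_Fc_Gc hfg1 hfg2 hfg3 hm hn
  have hGF := apply_Gc_Fc hgf1 hgf2 hgf3 hm hn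
  have hGG := apply_Gc_Gc hgg1 hgg2 hgg3 hm hn
  have same (a : ℂ) (ha : a * a = -1) := apply_Fc_add_smul_Gc_same B hFF hFG hGF hGG ha
  have opp (a : ℂ) (ha : a * a = -1) := apply_Fc_add_neg_smul_Gc B hFF hFG hGF hGG ha
  have hnegI : -I * -I = -1 := by rw [neg_mul_neg, I_mul_I]
  refine ⟨?_, fun hlt => ?_, fun hle => ?_, fun hlt => ?_, fun hle => ?_, ?_⟩
  · rw [L_natCast, L_natCast, hD, same I I_mul_I, ← Nat.cast_add, L_natCast, add_comm n]
  · rw [L_neg_natCast, L_natCast, hD, opp I I_mul_I, ← Nat.cast_sub hlt.le, L_natCast]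
    congr 1; ring
  · rw [L_neg_natCast, L_natCast, hD, opp I I_mul_I, Nat.sub_eq_zero_of_le hle, Fc_zero, Gc_zero,
      smul_zero, add_zero, smul_zero]
  · rw [L_natCast, L_neg_natCast, hD]
    nth_rw 1 [← neg_neg I]
    rw [opp (-I) hnegI, show (m : ℤ) - n = -((n - m : ℕ) : ℤ) by omega, L_neg_natCast]
    congr 1; ring
  · rw [L_natCast, L_neg_natCast, hD]
    nth_rw 1 [← neg_neg I]
    rw [opp (-I) hnegI, Nat.sub_eq_zero_of_le hle, Fc_zero, Gc_zero, smul_zero, add_zero,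
      smul_zero]
  · rw [L_neg_natCast, L_neg_natCast, hD, same (-I) hnegI,
      show -(m : ℤ) - n = -((m + n : ℕ) : ℤ) by push_cast; ring, L_neg_natCast, add_comm n]
    congr 1; ring

/-- The complexified Levi-Civita connection `∇̃` (given by its values on the real basis,
extended complex-bilinearly) takes the stated values on the `L_m`. -/
theorem nablaTilde_L_values (c h : ℝ) (hc : 0 < c) (hh : 0 < h)
    (D : Vc → Vc → Vc)
    (hadd1 : ∀ x y z : Vc, D (x + y) z = D x z + D y z)
    (hadd2 : ∀ x y z : Vc, D x (y + z) = D x y + D x z)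
    (hsmul1 : ∀ (r : ℂ) (x y : Vc), D (r • x) y = r • D x y)
    (hsmul2 : ∀ (r : ℂ) (x y : Vc), D x (r • y) = r • D x y)
    (hff1 : ∀ m n : ℕ, 1 ≤ m → m < n →
      D (Fc m) (Fc n) = (lam c h m n : ℂ) • Gc (n + m) - (((m : ℂ) + n) / 2) • Gc (n - m))
    (hff2 : ∀ m n : ℕ, 1 ≤ n → n < m → D (Fc m) (Fc n) = (lam c h m n : ℂ) • Gc (n + m))
    (hff3 : ∀ n : ℕ, 1 ≤ n → D (Fc n) (Fc n) = (lam c h n n : ℂ) • Gc (2 * n))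
    (hfg1 : ∀ m n : ℕ, 1 ≤ m → m < n →
      D (Fc m) (Gc n) = (((m : ℂ) + n) / 2) • Fc (n - m) - (lam c h m n : ℂ) • Fc (n + m))
    (hfg2 : ∀ m n : ℕ, 1 ≤ n → n < m → D (Fc m) (Gc n) = (-(lam c h m n : ℂ)) • Fc (n + m))
    (hfg3 : ∀ n : ℕ, 1 ≤ n → D (Fc n) (Gc n) = (-(lam c h n n : ℂ)) • Fc (2 * n))
    (hgf1 : ∀ m n : ℕ, 1 ≤ m → m < n → D (Gc n) (Fc m) = (-(lam c h n m : ℂ)) • Fc (n + m))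
    (hgf2 : ∀ m n : ℕ, 1 ≤ n → n < m →
      D (Gc n) (Fc m) = (-(lam c h n m : ℂ)) • Fc (n + m) - (((m : ℂ) + n) / 2) • Fc (m - n))
    (hgf3 : ∀ n : ℕ, 1 ≤ n → D (Gc n) (Fc n) = (-(lam c h n n : ℂ)) • Fc (2 * n))
    (hgg1 : ∀ m n : ℕ, 1 ≤ m → m < n →
      D (Gc m) (Gc n) = (-(lam c h m n : ℂ)) • Gc (n + m) - (((m : ℂ) + n) / 2) • Gc (n - m))
    (hgg2 : ∀ m n : ℕ, 1 ≤ n → n < m → D (Gc m) (Gc n) = (-(lam c h m n : ℂ)) • Gc (n + m))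
    (hgg3 : ∀ n : ℕ, 1 ≤ n → D (Gc n) (Gc n) = (-(lam c h n n : ℂ)) • Gc (2 * n))
    (m n : ℕ) (hm : 1 ≤ m) (hn : 1 ≤ n) :
    D (L m) (L n) = (-2 * Complex.I * (lam c h m n : ℂ)) • L ((m : ℤ) + n) ∧
    (m < n → D (L (-(m : ℤ))) (L n) = (Complex.I * ((m : ℂ) + n)) • L ((n : ℤ) - m)) ∧
    (n ≤ m → D (L (-(m : ℤ))) (L n) = 0) ∧
    (m < n → D (L m) (L (-(n : ℤ))) = (-(Complex.I * ((m : ℂ) + n))) • L ((m : ℤ) - n)) ∧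
    (n ≤ m → D (L m) (L (-(n : ℤ))) = 0) ∧
    D (L (-(m : ℤ))) (L (-(n : ℤ))) = (2 * Complex.I * (lam c h m n : ℂ)) • L (-(m : ℤ) - n) :=
  nablaTilde_L_values_general c h D hadd1 hadd2 hsmul1 hsmul2 hff1 hff2 hff3 hfg1 hfg2 hfg3 hgf1
    hgf2 hgf3 hgg1 hgg2 hgg3 m n hm hn
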